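/- Let m ≥ 3 be an odd natural number. The equation ü − u + u^m = 0 has precisely two homoclinic solutions up to translations, namely h and −h, where h is positive, symmetric about a point z₀, monotone increasing on (−∞, z₀] and monotone decreasing on [z₀, ∞). -/

import Mathlib

/-!
The soliton `h = kdvProfile ((m - 1) / 2)` solves the equation, and for odd `m` so does `-h`.
Conversely, a homoclinic `u` conserves the energy `u̇²/2 - u²/2 + u^(m+1)/(m+1)`, which vanishes
at `±∞`. At a point `z₁` where `|u|` is maximal, `u̇ = 0`, so `u(z₁)^(m-1) = (m+1)/2` and
`u(z₁) = ±h(0)`. The first-order system for `(u, u̇)` is Lipschitz on the bounded range of both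
solutions, so uniqueness of its solutions gives `u = ±h(· - z₁)`.
-/

open Filter Topology Set

/-- A homoclinic solution of the travelling-wave generalised KdV equation
`ü − u + u^m = 0`: a nonconstant `C²` solution with `u, u̇ → 0` as `z → ±∞`. -/
def IsHomoclinicKdV (m : ℕ) (u : ℝ → ℝ) : Prop :=
  ContDiff ℝ 2 u ∧
  (∀ z : ℝ, deriv (deriv u) z - u z + (u z) ^ m = 0) ∧
  (∃ z w : ℝ, u z ≠ u w) ∧
  Tendsto u atTop (𝓝 0) ∧ Tendsto u atBot (𝓝 0) ∧
  Tendsto (deriv u) atTop (𝓝 0) ∧ Tendsto (deriv u) atBot (𝓝 0)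

open Real
open scoped NNReal

theorem Continuous.exists_forall_abs_le_of_tendsto_zero {X : Type*} [TopologicalSpace X]
    [Nonempty X] {f : X → ℝ} (hf : Continuous f) (hlim : Tendsto f (cocompact X) (𝓝 0)) :
    ∃ x, ∀ y, |f y| ≤ |f x| := by
  by_cases hzero : ∀ x, f x = 0
  · exact ⟨Classical.arbitrary X, fun y => by simp [hzero]⟩
  obtain ⟨x₀, hx₀⟩ := not_forall.1 hzero
  have hsmall : Tendsto (fun x => |f x|) (cocompact X) (𝓝 0) := by
    simpa using hlim.abs
  exact hf.abs.exists_forall_ge' x₀ (hsmall.eventually (Iic_mem_nhds (abs_pos.2 hx₀)))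

theorem ODE_solution_unique_univ_of_second_order {E : Type*} [NormedAddCommGroup E]
    [NormedSpace ℝ E] {F : E → E} {K : ℝ≥0} {s : Set E} (hF : LipschitzOnWith K F s)
    {f f' g g' : ℝ → E} {t₀ : ℝ}
    (hf : ∀ t, HasDerivAt f (f' t) t) (hf' : ∀ t, HasDerivAt f' (F (f t)) t)
    (hfs : ∀ t, f t ∈ s)
    (hg : ∀ t, HasDerivAt g (g' t) t) (hg' : ∀ t, HasDerivAt g' (F (g t)) t)
    (hgs : ∀ t, g t ∈ s)
    (h₀ : f t₀ = g t₀) (h₀' : f' t₀ = g' t₀) : f = g := by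
  have hv : LipschitzOnWith (max 1 (K * 1)) (fun x : E × E => (x.2, F x.1)) (Prod.fst ⁻¹' s) :=
    (LipschitzWith.lipschitzOnWith LipschitzWith.prod_snd).prodMk
        (hF.comp (LipschitzWith.lipschitzOnWith LipschitzWith.prod_fst) fun _ hx => hx)
  have hphase := ODE_solution_unique_univ (v := fun _ x => (x.2, F x.1))
    (f := fun t => (f t, f' t)) (g := fun t => (g t, g' t)) (fun _ => hv)
    (fun t => ⟨(hf t).prodMk (hf' t), hfs t⟩) (fun t => ⟨(hg t).prodMk (hg' t), hgs t⟩)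
    (Prod.ext h₀ h₀')
  exact funext fun t => congrArg Prod.fst (congrFun hphase t)

theorem energy_eq_of_hasDerivAt {V F u u' : ℝ → ℝ} (hV : ∀ x, HasDerivAt V (F x) x)
    (hu : ∀ t, HasDerivAt u (u' t) t) (hu' : ∀ t, HasDerivAt u' (F (u t)) t) (s t : ℝ) :
    u' s ^ 2 / 2 - V (u s) = u' t ^ 2 / 2 - V (u t) := by
  have hE : ∀ t, HasDerivAt (fun t => u' t ^ 2 / 2 - V (u t)) 0 t := fun t => by
    refine ((((hu' t).pow 2).div_const 2).sub ((hV (u t)).comp t (hu t))).congr_deriv ?_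
    ring
  exact is_const_of_deriv_eq_zero (fun t => (hE t).differentiableAt) (fun t => (hE t).deriv) s t

theorem Real.hasDerivAt_tanh (x : ℝ) : HasDerivAt tanh (cosh x ^ 2)⁻¹ x := by
  have hquot := (hasDerivAt_sinh x).div (hasDerivAt_cosh x) (cosh_pos x).ne'
  rw [show tanh = sinh / cosh from funext fun y => tanh_eq_sinh_div_cosh y]
  refine hquot.congr_deriv ?_
  rw [← sq, ← sq, cosh_sq_sub_sinh_sq, one_div]

namespace IsHomoclinicKdV

variable {m : ℕ} {u : ℝ → ℝ}

theorem of_hasDerivAt {u' : ℝ → ℝ} (hu : ∀ z, HasDerivAt u (u' z) z)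
    (hu' : ∀ z, HasDerivAt u' (u z - u z ^ m) z) (hne : ∃ z w, u z ≠ u w)
    (hlim : Tendsto u (cocompact ℝ) (𝓝 0)) (hlim' : Tendsto u' (cocompact ℝ) (𝓝 0)) :
    IsHomoclinicKdV m u := by
  have hderiv : deriv u = u' := funext fun z => (hu z).deriv
  have hderiv' : deriv u' = fun z => u z - u z ^ m := funext fun z => (hu' z).deriv
  have hcont : Continuous u := continuous_iff_continuousAt.2 fun z => (hu z).continuousAt
  have hC1 : ContDiff ℝ 1 u' := contDiff_one_iff_deriv.2
    ⟨fun z => (hu' z).differentiableAt, hderiv' ▸ hcont.sub (hcont.pow m)⟩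
  rw [cocompact_eq_atBot_atTop, tendsto_sup] at hlim hlim'
  have hC2 : ContDiff ℝ (1 + 1) u :=
    contDiff_succ_iff_deriv.2 ⟨fun z => (hu z).differentiableAt, by simp, hderiv ▸ hC1⟩
  refine ⟨hC2, fun z => ?_, hne, hlim.2, hlim.1, hderiv ▸ hlim'.2, hderiv ▸ hlim'.1⟩
  rw [hderiv, hderiv']
  ring

theorem hasDerivAt (hu : IsHomoclinicKdV m u) (z : ℝ) : HasDerivAt u (deriv u z) z :=
  ((hu.1.differentiable two_ne_zero) z).hasDerivAt

theorem hasDerivAt_deriv (hu : IsHomoclinicKdV m u) (z : ℝ) :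
    HasDerivAt (deriv u) (u z - u z ^ m) z := by
  have hC : ContDiff ℝ (1 + 1) u := hu.1
  have hdiff := (contDiff_succ_iff_deriv.1 hC).2.2.differentiable one_ne_zero
  exact (hdiff z).hasDerivAt.congr_deriv (by linarith [hu.2.1 z])

theorem tendsto_cocompact (hu : IsHomoclinicKdV m u) : Tendsto u (cocompact ℝ) (𝓝 0) := by
  rw [cocompact_eq_atBot_atTop, tendsto_sup]
  exact ⟨hu.2.2.2.2.1, hu.2.2.2.1⟩

theorem neg (hm : Odd m) (hu : IsHomoclinicKdV m u) : IsHomoclinicKdV m (fun z => -u z) := by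
  obtain ⟨z, w, hzw⟩ := hu.2.2.1
  have hlim' : Tendsto (deriv u) (cocompact ℝ) (𝓝 0) := by
    rw [cocompact_eq_atBot_atTop, tendsto_sup]
    exact ⟨hu.2.2.2.2.2.2, hu.2.2.2.2.2.1⟩
  refine of_hasDerivAt (u' := fun z => -deriv u z) (fun z => (hu.hasDerivAt z).neg)
    (fun z => (hu.hasDerivAt_deriv z).neg.congr_deriv ?_) ⟨z, w, by simpa using hzw⟩
    (by simpa using hu.tendsto_cocompact.neg) (by simpa using hlim'.neg)
  rw [hm.neg_pow]
  ring

theorem exists_forall_abs_le (hu : IsHomoclinicKdV m u) : ∃ z₁, ∀ z, |u z| ≤ |u z₁| :=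
  (hu.1.continuous).exists_forall_abs_le_of_tendsto_zero hu.tendsto_cocompact

theorem energy_eq_zero (hu : IsHomoclinicKdV m u) (z : ℝ) :
    deriv u z ^ 2 / 2 - (u z ^ 2 / 2 - u z ^ (m + 1) / (m + 1)) = 0 := by
  set V : ℝ → ℝ := fun x => x ^ 2 / 2 - x ^ (m + 1) / (m + 1)
  have hV : ∀ x, HasDerivAt V (x - x ^ m) x := fun x => by
    refine (((hasDerivAt_pow 2 x).div_const 2).sub
      ((hasDerivAt_pow (m + 1) x).div_const _)).congr_deriv ?_
    field_simp
    push_cast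
    ring
  have hconst := energy_eq_of_hasDerivAt hV hu.hasDerivAt hu.hasDerivAt_deriv z
  have hlim : Tendsto (fun t => deriv u t ^ 2 / 2 - V (u t)) atTop (𝓝 (0 ^ 2 / 2 - V 0)) :=
    ((hu.2.2.2.2.2.1.pow 2).div_const 2).sub
      (((continuous_pow 2).div_const 2).sub ((continuous_pow (m + 1)).div_const _)
        |>.tendsto 0 |>.comp hu.2.2.2.1)
  refine (tendsto_nhds_unique (tendsto_const_nhds.congr hconst) hlim).trans ?_
  simp [V]

end IsHomoclinicKdV

/-- For `p = (m - 1) / 2` this is the soliton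
`((m + 1) / 2) ^ (1 / (m - 1)) * sech ((m - 1) z / 2) ^ (2 / (m - 1))`. -/
noncomputable def kdvProfile (p z : ℝ) : ℝ := (p + 1) ^ (2 * p)⁻¹ * cosh (p * z) ^ (-p⁻¹)

section kdvProfile

variable {p : ℝ}

theorem kdvProfile_pos (hp : 0 < p + 1) (z : ℝ) : 0 < kdvProfile p z :=
  mul_pos (rpow_pos_of_pos hp _) (rpow_pos_of_pos (cosh_pos _) _)

theorem kdvProfile_neg (z : ℝ) : kdvProfile p (-z) = kdvProfile p z := by
  rw [kdvProfile, kdvProfile, mul_neg, cosh_neg]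

theorem kdvProfile_le_kdvProfile (hp : 0 ≤ p) {z w : ℝ} (hzw : |w| ≤ |z|) :
    kdvProfile p z ≤ kdvProfile p w := by
  have hcosh : cosh (p * w) ≤ cosh (p * z) := by
    rw [cosh_le_cosh, abs_mul, abs_mul]
    exact mul_le_mul_of_nonneg_left hzw (abs_nonneg p)
  exact mul_le_mul_of_nonneg_left
    (rpow_le_rpow_of_nonpos (cosh_pos _) hcosh (neg_nonpos.2 (inv_nonneg.2 hp)))
    (rpow_nonneg (by linarith) _)

theorem kdvProfile_monotoneOn (hp : 0 ≤ p) : MonotoneOn (kdvProfile p) (Iic 0) :=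
  fun _ _ _ hw hzw => kdvProfile_le_kdvProfile hp (abs_le_abs_of_nonpos hw hzw)

theorem kdvProfile_antitoneOn (hp : 0 ≤ p) : AntitoneOn (kdvProfile p) (Ici 0) :=
  fun _ hz _ _ hzw => kdvProfile_le_kdvProfile hp (abs_le_abs_of_nonneg hz hzw)

theorem kdvProfile_rpow_two_mul (hp : 0 < p) (z : ℝ) :
    kdvProfile p z ^ (2 * p) = (p + 1) / cosh (p * z) ^ 2 := by
  rw [kdvProfile, mul_rpow (rpow_nonneg (by linarith) _) (rpow_nonneg (cosh_pos _).le _),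
    ← rpow_mul (by linarith), ← rpow_mul (cosh_pos _).le, inv_mul_cancel₀ (by positivity),
    rpow_one, show -p⁻¹ * (2 * p) = -2 by field_simp, rpow_neg (cosh_pos _).le, rpow_two,
    div_eq_mul_inv]

theorem tendsto_kdvProfile_cocompact (hp : 0 < p) :
    Tendsto (kdvProfile p) (cocompact ℝ) (𝓝 0) := by
  have habs : Tendsto (fun z => |p * z|) (cocompact ℝ) atTop := by
    simpa [abs_mul, abs_of_pos hp] using
      (tendsto_norm_cocompact_atTop (E := ℝ)).const_mul_atTop hp
  have hcosh : Tendsto (fun z => cosh (p * z)) (cocompact ℝ) atTop :=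
    tendsto_atTop_mono (fun z => by
      rw [← cosh_abs]
      exact (self_le_sinh_iff.2 (abs_nonneg _)).trans (sinh_lt_cosh _).le) habs
  have hlim := ((tendsto_rpow_neg_atTop (inv_pos.2 hp)).comp hcosh).const_mul
    ((p + 1) ^ (2 * p)⁻¹)
  rw [mul_zero] at hlim
  exact hlim

noncomputable def kdvProfileDeriv (p z : ℝ) : ℝ := -(kdvProfile p z * tanh (p * z))

theorem abs_kdvProfileDeriv_le (hp : 0 < p + 1) (z : ℝ) :
    |kdvProfileDeriv p z| ≤ kdvProfile p z := by
  rw [kdvProfileDeriv, abs_neg, abs_mul, abs_of_pos (kdvProfile_pos hp z)]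
  exact mul_le_of_le_one_right (kdvProfile_pos hp z).le (abs_tanh_lt_one _).le

theorem hasDerivAt_kdvProfile (hp : p ≠ 0) (z : ℝ) :
    HasDerivAt (kdvProfile p) (kdvProfileDeriv p z) z := by
  have hcosh : HasDerivAt (fun z => cosh (p * z)) (sinh (p * z) * p) z :=
    (hasDerivAt_cosh _).comp z ((hasDerivAt_id z).const_mul p |>.congr_deriv (mul_one p))
  refine ((hcosh.rpow_const (Or.inl (cosh_pos _).ne')).const_mul _).congr_deriv ?_
  rw [kdvProfileDeriv, kdvProfile, tanh_eq_sinh_div_cosh, rpow_sub (cosh_pos _), rpow_one]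
  field_simp

theorem hasDerivAt_kdvProfileDeriv (hp : 0 < p) (z : ℝ) :
    HasDerivAt (kdvProfileDeriv p) (kdvProfile p z - kdvProfile p z ^ (2 * p + 1)) z := by
  have htanh : HasDerivAt (fun z => tanh (p * z)) ((cosh (p * z) ^ 2)⁻¹ * p) z :=
    (hasDerivAt_tanh _).comp z ((hasDerivAt_id z).const_mul p |>.congr_deriv (mul_one p))
  refine ((hasDerivAt_kdvProfile hp.ne' z).mul htanh).neg.congr_deriv ?_
  rw [rpow_add (kdvProfile_pos (by linarith) z), rpow_one, kdvProfile_rpow_two_mul hp,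
    kdvProfileDeriv, tanh_eq_sinh_div_cosh]
  have hsq := cosh_sq_sub_sinh_sq (p * z)
  have hc := (cosh_pos (p * z)).ne'
  field_simp
  linear_combination (-kdvProfile p z) * hsq

end kdvProfile

section Soliton

variable {m : ℕ}

theorem sub_one_div_two_pos (hm : 2 ≤ m) : (0 : ℝ) < (m - 1) / 2 := by
  have : (2 : ℝ) ≤ m := by exact_mod_cast hm
  linarith

theorem hasDerivAt_kdvProfileDeriv_of_two_le (hm : 2 ≤ m) (z : ℝ) :
    HasDerivAt (kdvProfileDeriv ((m - 1) / 2))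
      (kdvProfile ((m - 1) / 2) z - kdvProfile ((m - 1) / 2) z ^ m) z := by
  have hp := sub_one_div_two_pos hm
  have h := hasDerivAt_kdvProfileDeriv hp z
  rwa [show 2 * (((m : ℝ) - 1) / 2) + 1 = (m : ℕ) by ring, rpow_natCast] at h

theorem isHomoclinicKdV_kdvProfile (hm : 2 ≤ m) :
    IsHomoclinicKdV m (kdvProfile ((m - 1) / 2)) := by
  have hp := sub_one_div_two_pos hm
  have hlim := tendsto_kdvProfile_cocompact hp
  have hpeak := kdvProfile_pos (p := (m - 1) / 2) (by linarith) 0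
  obtain ⟨z, hz⟩ := (hlim.eventually (gt_mem_nhds hpeak)).exists
  exact .of_hasDerivAt (hasDerivAt_kdvProfile hp.ne') (hasDerivAt_kdvProfileDeriv_of_two_le hm)
    ⟨z, 0, hz.ne⟩ hlim (squeeze_zero_norm (abs_kdvProfileDeriv_le (by linarith)) hlim)

theorem kdvProfile_zero_pow (hm : 2 ≤ m) :
    kdvProfile ((m - 1) / 2) 0 ^ (m - 1) = ((m : ℝ) + 1) / 2 := by
  have hp := sub_one_div_two_pos hm
  have h := kdvProfile_rpow_two_mul hp 0
  rwa [show 2 * (((m : ℝ) - 1) / 2) = (m - 1 : ℕ) by rw [Nat.cast_sub (by omega)]; ring,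
    rpow_natCast, mul_zero, cosh_zero, one_pow, div_one,
    show ((m : ℝ) - 1) / 2 + 1 = (m + 1) / 2 by ring] at h

theorem IsHomoclinicKdV.eq_kdvProfile_zero (hm : 2 ≤ m) {u : ℝ → ℝ}
    (hu : IsHomoclinicKdV m u) {z₁ : ℝ} (hpos : 0 < u z₁) (hcrit : deriv u z₁ = 0) :
    u z₁ = kdvProfile ((m - 1) / 2) 0 := by
  have henergy := hu.energy_eq_zero z₁
  rw [hcrit, show m + 1 = (m - 1) + 2 by omega, pow_add] at henergy
  have hpow : u z₁ ^ (m - 1) = ((m : ℝ) + 1) / 2 := by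
    have hfactor : u z₁ ^ 2 * ((m + 1) / 2 - u z₁ ^ (m - 1)) = 0 := by
      field_simp at henergy ⊢
      linarith
    linarith [(mul_eq_zero.1 hfactor).resolve_left (by positivity)]
  have hpeak := kdvProfile_pos (p := (m - 1) / 2) (by linarith [sub_one_div_two_pos hm]) 0
  rw [← pow_left_inj₀ hpos.le hpeak.le (by omega : m - 1 ≠ 0), hpow, kdvProfile_zero_pow hm]

theorem IsHomoclinicKdV.eq_kdvProfile_sub (hm : 2 ≤ m) {u : ℝ → ℝ}
    (hu : IsHomoclinicKdV m u) {z₁ : ℝ} (hmax : ∀ z, |u z| ≤ u z₁) :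
    u = fun z => kdvProfile ((m - 1) / 2) (z - z₁) := by
  have hp := sub_one_div_two_pos hm
  set h := kdvProfile ((m - 1) / 2)
  have hpos : 0 < u z₁ := by
    by_contra! hle
    obtain ⟨z, w, hzw⟩ := hu.2.2.1
    have hzero : ∀ z, u z = 0 := fun z => abs_nonpos_iff.1 ((hmax z).trans hle)
    exact hzw (by rw [hzero z, hzero w])
  have hcrit : deriv u z₁ = 0 :=
    IsLocalMax.deriv_eq_zero (Eventually.of_forall fun z => (le_abs_self _).trans (hmax z))
  have hpeak := hu.eq_kdvProfile_zero hm hpos hcrit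
  obtain ⟨K, hK⟩ : ∃ K, LipschitzOnWith K (fun x : ℝ => x - x ^ m) (Icc (-h 0) (h 0)) :=
    (contDiff_id.sub (contDiff_id.pow m)).contDiffOn.exists_lipschitzOnWith one_ne_zero
      (convex_Icc _ _) isCompact_Icc
  refine ODE_solution_unique_univ_of_second_order hK hu.hasDerivAt hu.hasDerivAt_deriv
    (fun z => abs_le.1 ((hmax z).trans_eq hpeak))
    (fun z => (hasDerivAt_kdvProfile hp.ne' (z - z₁)).comp_sub_const z z₁)
    (fun z => (hasDerivAt_kdvProfileDeriv_of_two_le hm (z - z₁)).comp_sub_const z z₁)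
    (fun z => ⟨by linarith [kdvProfile_pos (p := (m - 1) / 2) (by linarith) (z - z₁)],
      kdvProfile_le_kdvProfile hp.le (by simp)⟩)
    (by simpa using hpeak) (t₀ := z₁) (by simpa [kdvProfileDeriv] using hcrit)

end Soliton

/-- For odd `m ≥ 3` the equation `ü − u + u^m = 0` has precisely two homoclinic
solutions up to translations, namely `h` and `−h`, where `h` is positive,
symmetric about a point `z₀`, monotone increasing on `(−∞, z₀]` and monotone
decreasing on `[z₀, ∞)`. -/
theorem kdv_homoclinic_odd (m : ℕ) (hm : 3 ≤ m) (hmodd : Odd m) :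
    ∃ (h : ℝ → ℝ) (z₀ : ℝ),
      IsHomoclinicKdV m h ∧
      IsHomoclinicKdV m (fun z => -h z) ∧
      (∀ z : ℝ, 0 < h z) ∧
      (∀ z : ℝ, h (z₀ + z) = h (z₀ - z)) ∧
      MonotoneOn h (Set.Iic z₀) ∧
      AntitoneOn h (Set.Ici z₀) ∧
      (∀ u : ℝ → ℝ, IsHomoclinicKdV m u →
        (∃ c : ℝ, u = fun z => h (z + c)) ∨ (∃ c : ℝ, u = fun z => -h (z + c))) := by
  have hm2 : 2 ≤ m := by omega
  have hp := sub_one_div_two_pos hm2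
  have hsol := isHomoclinicKdV_kdvProfile hm2
  refine ⟨kdvProfile ((m - 1) / 2), 0, hsol, hsol.neg hmodd, kdvProfile_pos (by linarith),
    fun z => by rw [zero_sub, kdvProfile_neg, zero_add], kdvProfile_monotoneOn hp.le,
    kdvProfile_antitoneOn hp.le, fun u hu => ?_⟩
  obtain ⟨z₁, hz₁⟩ := hu.exists_forall_abs_le
  rcases le_total 0 (u z₁) with hnonneg | hnonpos
  · refine .inl ⟨-z₁, ?_⟩
    simpa [sub_eq_add_neg] using hu.eq_kdvProfile_sub hm2 (z₁ := z₁)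
      fun z => (hz₁ z).trans_eq (abs_of_nonneg hnonneg)
  · refine .inr ⟨-z₁, funext fun z => ?_⟩
    have hneg := congrFun ((hu.neg hmodd).eq_kdvProfile_sub hm2 (z₁ := z₁)
      fun z => by simpa [abs_of_nonpos hnonpos] using hz₁ z) z
    rw [← sub_eq_add_neg, ← hneg, neg_neg]
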